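/- Let s = s_1 s_2 s_3 … ∈ Ṡ and let s′ = (s_1+1) s_2 s_3 … be the address obtained from s by increasing the first entry by 1. Then the shift σ preserves the circular order of S̄ on the half-open interval [s, s′): whenever a, b, c ∈ [s, s′) satisfy a < b < c, their images satisfy σ(a) < σ(b) < σ(c), or σ(b) < σ(c) < σ(a), or σ(c) < σ(a) < σ(b) (in the linear order of S̄, in which ∞ is the greatest element). -/
import Mathlib


noncomputable section

/-- Entries of an address: a real number or `∞`. -/
abbrev Entry : Type := WithTop ℝ

/-- An address is a sequence of entries. -/
abbrev Addr : Type := ℕ → Entry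

/-- The address `∞` (all of whose entries are infinite). -/
def topAddr : Addr := fun _ => ⊤

/-- The shift map `σ`, deleting the first entry. -/
def shift (a : Addr) : Addr := fun k => a (k + 1)

/-- The iterated shift `σ^k`. -/
def shiftIter (a : Addr) (k : ℕ) : Addr := fun j => a (j + k)

/-- `σ^k(a)` is defined (all earlier iterates differ from `∞`). -/
def shiftDef (a : Addr) (k : ℕ) : Prop := ∀ j, j < k → shiftIter a j ≠ topAddr

/-- Prepending an entry to an address. -/
def consAddr (x : Entry) (a : Addr) : Addr := fun k => if k = 0 then x else a (k - 1)

/-- The lexicographic (strict) order on addresses. -/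
def addrLt (a b : Addr) : Prop := ∃ k, (∀ j, j < k → a j = b j) ∧ a k < b k

/-- The lexicographic order on addresses. -/
def addrLe (a b : Addr) : Prop := addrLt a b ∨ a = b

/-- Infinite external addresses: all entries are integers. -/
def IsExtAddr (a : Addr) : Prop := ∀ k, ∃ m : ℤ, a k = ((m : ℝ) : Entry)

/-- Intermediate external addresses of length `n ≥ 1`: the first `n - 2` entries are
integers, the `(n-1)`-st entry lies in `ℤ + 1/2`, and all further entries are `∞`
(for `n = 1` this is the address `∞` itself). -/
def IsIntermediate (a : Addr) (n : ℕ) : Prop :=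
  1 ≤ n ∧ (∀ k, k + 2 < n → ∃ m : ℤ, a k = ((m : ℝ) : Entry)) ∧
    (∀ k, k + 2 = n → ∃ m : ℤ, a k = (((m : ℝ) + 1 / 2 : ℝ) : Entry)) ∧
    (∀ k, n ≤ k + 1 → a k = ⊤)

/-- Membership in `Ṡ`: infinite external addresses and intermediate ones of length `≥ 2`. -/
def InSDot (a : Addr) : Prop := IsExtAddr a ∨ ∃ n, 2 ≤ n ∧ IsIntermediate a n

/-- Membership in `S̄ = Ṡ ∪ {∞}`. -/
def InSBar (a : Addr) : Prop := InSDot a ∨ a = topAddr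

/-- `a` is periodic of (exact) period `n`. -/
def PeriodicAddr (a : Addr) (n : ℕ) : Prop :=
  1 ≤ n ∧ shiftIter a n = a ∧ ∀ m, 1 ≤ m → m < n → shiftIter a m ≠ a

/-- Itinerary entries: integers `j`, boundary symbols `[j/(j-1)]` (encoded `bdy j`),
or the symbol `*`. -/
inductive ItinEntry : Type
  | int : ℤ → ItinEntry
  | bdy : ℤ → ItinEntry
  | star : ItinEntry
  deriving DecidableEq

open scoped Classical in
/-- The itinerary `itin_s(r)`; position `k` holds the entry `u_{k+1}` of the paper:
`u_{k+1} = j` if `js < σ^k(r) < (j+1)s`, the boundary symbol `[j/(j-1)]` if `σ^k(r) = js`,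
and `*` if `σ^k(r) = ∞`. -/
def itin (s r : Addr) : ℕ → ItinEntry := fun k =>
  if shiftIter r k = topAddr then ItinEntry.star
  else if h : ∃ j : ℤ, shiftIter r k = consAddr ((j : ℝ) : Entry) s then ItinEntry.bdy h.choose
  else if h : ∃ j : ℤ, addrLt (consAddr ((j : ℝ) : Entry) s) (shiftIter r k) ∧
      addrLt (shiftIter r k) (consAddr (((j + 1 : ℤ) : ℝ) : Entry) s) then ItinEntry.int h.choose
  else ItinEntry.star

/-- Replace each boundary symbol `[j/(j-1)]` by `j`. -/
def entryPlus : ItinEntry → ItinEntry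
  | ItinEntry.bdy j => ItinEntry.int j
  | e => e

/-- Replace each boundary symbol `[j/(j-1)]` by `j - 1`. -/
def entryMinus : ItinEntry → ItinEntry
  | ItinEntry.bdy j => ItinEntry.int (j - 1)
  | e => e

/-- The itinerary `itin⁺_s(r)`. -/
def itinPlus (s r : Addr) : ℕ → ItinEntry := fun k => entryPlus (itin s r k)

/-- The itinerary `itin⁻_s(r)`. -/
def itinMinus (s r : Addr) : ℕ → ItinEntry := fun k => entryMinus (itin s r k)

/-- The periodic itinerary `(u_1 … u_n)^∞` (with `u_i` encoded as `u (i - 1)`). -/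
def perItin (u : ℕ → ℤ) (n : ℕ) : ℕ → ItinEntry := fun k => ItinEntry.int (u (k % n))

/-- The finite itinerary word `u_1 … u_{n-1} *` (star from position `n - 1` onwards). -/
def finWord (u : ℕ → ℤ) (n : ℕ) : ℕ → ItinEntry := fun k =>
  if k + 1 < n then ItinEntry.int (u k) else ItinEntry.star

/-- A combinatorial characteristic ray pair of period `n` with itinerary `(u_1 … u_n)^∞`. -/
def CharRayPair (rm rp : Addr) (n : ℕ) (u : ℕ → ℤ) : Prop :=
  IsExtAddr rm ∧ IsExtAddr rp ∧ PeriodicAddr rm n ∧ PeriodicAddr rp n ∧ addrLt rm rp ∧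
    (∀ k, 1 ≤ k → ¬(addrLt rm (shiftIter rm k) ∧ addrLt (shiftIter rm k) rp)) ∧
    (∀ k, 1 ≤ k → ¬(addrLt rm (shiftIter rp k) ∧ addrLt (shiftIter rp k) rp)) ∧
    itinMinus rm rm = perItin u n ∧ itinMinus rm rp = perItin u n ∧
    addrLt (shiftIter rp (n - 1)) (shiftIter rm (n - 1))

section StmtFourteenAux

open Classical

lemma addrLt_irrefl (a : Addr) : ¬ addrLt a a := by
  rintro ⟨k, -, hk⟩; exact lt_irrefl _ hk

lemma addrLt_trans {a b c : Addr} (hab : addrLt a b) (hbc : addrLt b c) : addrLt a c := by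
  obtain ⟨k, hk1, hk2⟩ := hab
  obtain ⟨l, hl1, hl2⟩ := hbc
  rcases lt_trichotomy k l with h | h | h
  · exact ⟨k, fun j hj => (hk1 j hj).trans (hl1 j (hj.trans h)),
      by rw [← hl1 k h]; exact hk2⟩
  · subst h
    exact ⟨k, fun j hj => (hk1 j hj).trans (hl1 j hj), hk2.trans hl2⟩
  · exact ⟨l, fun j hj => (hk1 j (hj.trans h)).trans (hl1 j hj),
      by rw [hk1 l h]; exact hl2⟩

lemma addrLt_of_lt_of_le {a b c : Addr} (h1 : addrLt a b) (h2 : addrLe b c) : addrLt a c := by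
  rcases h2 with h | h
  · exact addrLt_trans h1 h
  · exact h ▸ h1

lemma addrLt_of_le_of_lt {a b c : Addr} (h1 : addrLe a b) (h2 : addrLt b c) : addrLt a c := by
  rcases h1 with h | h
  · exact addrLt_trans h h2
  · exact h ▸ h2

lemma addrLt_total {a b : Addr} (h : a ≠ b) : addrLt a b ∨ addrLt b a := by
  have hne : ∃ k, a k ≠ b k := by
    by_contra hc; push_neg at hc; exact h (funext hc)
  have hk := Nat.find_spec hne
  have hmin : ∀ j, j < Nat.find hne → a j = b j := fun j hj =>
    not_not.mp (Nat.find_min hne hj)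
  rcases lt_or_gt_of_ne hk with h1 | h1
  · exact Or.inl ⟨Nat.find hne, hmin, h1⟩
  · exact Or.inr ⟨Nat.find hne, fun j hj => (hmin j hj).symm, h1⟩

lemma not_addrLt_topAddr_left (x : Addr) : ¬ addrLt topAddr x := by
  rintro ⟨k, -, hk⟩
  simp only [topAddr] at hk
  exact not_top_lt hk

lemma addrLt_topAddr {x : Addr} (h : x ≠ topAddr) : addrLt x topAddr := by
  have hne : ∃ k, x k ≠ ⊤ := by
    by_contra hc; push_neg at hc
    exact h (funext fun k => hc k)
  refine ⟨Nat.find hne, fun j hj => ?_, ?_⟩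
  · have := not_not.mp (Nat.find_min hne hj)
    simp [topAddr, this]
  · exact lt_top_iff_ne_top.mpr (Nat.find_spec hne)

lemma shift_lt_of_eq0 {a b : Addr} (h0 : a 0 = b 0) (h : addrLt a b) :
    addrLt (shift a) (shift b) := by
  obtain ⟨k, h1, h2⟩ := h
  cases k with
  | zero => exact absurd h0 (ne_of_lt h2)
  | succ k => exact ⟨k, fun j hj => h1 (j + 1) (by omega), h2⟩

lemma shift_le_of_eq0 {a b : Addr} (h0 : a 0 = b 0) (h : addrLe a b) :
    addrLe (shift a) (shift b) := by
  rcases h with h | h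
  · exact Or.inl (shift_lt_of_eq0 h0 h)
  · exact Or.inr (by rw [h])

lemma addrLt.le0 {a b : Addr} (h : addrLt a b) : a 0 ≤ b 0 := by
  obtain ⟨k, h1, h2⟩ := h
  cases k with
  | zero => exact le_of_lt h2
  | succ k => exact le_of_eq (h1 0 (Nat.succ_pos k))

lemma addrLe.le0 {a b : Addr} (h : addrLe a b) : a 0 ≤ b 0 := by
  rcases h with h | h
  · exact h.le0
  · exact le_of_eq (congrFun h 0)

/-- Structure of the first entry of an element of `Ṡ`: either it is an integer and the
shift is not `∞`, or it is a half-integer and the shift is `∞`. -/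
lemma sdot_first {x : Addr} (hx : InSDot x) :
    ((∃ m : ℤ, x 0 = ((m : ℝ) : Entry)) ∧ shift x ≠ topAddr) ∨
    ((∃ m : ℤ, x 0 = (((m : ℝ) + 1 / 2 : ℝ) : Entry)) ∧ shift x = topAddr) := by
  rcases hx with hx | ⟨n, hn, -, hint, hhalf, htop⟩
  · left
    refine ⟨hx 0, fun hc => ?_⟩
    obtain ⟨m, hm⟩ := hx 1
    have h1 : x 1 = ⊤ := by
      have := congrFun hc 0
      simpa [shift, topAddr] using this
    rw [hm] at h1
    exact WithTop.coe_ne_top h1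
  · rcases eq_or_lt_of_le hn with h2 | h2
    · right
      refine ⟨hhalf 0 (by omega), funext fun k => ?_⟩
      simp only [shift, topAddr]
      exact htop (k + 1) (by omega)
    · left
      refine ⟨hint 0 (by omega), fun hc => ?_⟩
      obtain ⟨m, hm⟩ := hhalf (n - 2) (by omega)
      have h3 : x (n - 3 + 1) = ⊤ := by
        have := congrFun hc (n - 3)
        simpa [shift, topAddr] using this
      have h4 : n - 3 + 1 = n - 2 := by omega
      rw [h4, hm] at h3
      exact WithTop.coe_ne_top h3

lemma sdot_ne_top {x : Addr} (hx : InSDot x) : x ≠ topAddr := by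
  rcases sdot_first hx with ⟨⟨m, hm⟩, -⟩ | ⟨⟨m, hm⟩, -⟩ <;>
  · intro hc
    rw [hc] at hm
    exact WithTop.coe_ne_top hm.symm

lemma lt_s'_cases {s s' x : Addr} (h0 : s' 0 = s 0 + 1) (hsh : shift s' = shift s)
    (h : addrLt x s') :
    x 0 < s 0 + 1 ∨ (x 0 = s 0 + 1 ∧ addrLt (shift x) (shift s)) := by
  obtain ⟨k, h1, h2⟩ := h
  cases k with
  | zero => exact Or.inl (h0 ▸ h2)
  | succ k =>
    have he : x 0 = s 0 + 1 := h0 ▸ h1 0 (Nat.succ_pos k)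
    refine Or.inr ⟨he, ?_⟩
    rw [← hsh]
    exact ⟨k, fun j hj => h1 (j + 1) (by omega), h2⟩

/-- Key dichotomy: for `x < y` in `[s, s')`, either the shifts are ordered the same way,
or the order wraps around, crossing `σ(s)`. -/
lemma stmt14_claim1 {s x y : Addr} (hs : InSDot s) (hx : InSDot x) (hy : InSDot y)
    (hsx : addrLe s x)
    (hyu : y 0 < s 0 + 1 ∨ (y 0 = s 0 + 1 ∧ addrLt (shift y) (shift s)))
    (hxy : addrLt x y) :
    addrLt (shift x) (shift y) ∨
      (addrLt (shift y) (shift s) ∧ addrLe (shift s) (shift x)) := by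
  by_cases h0 : x 0 = y 0
  · exact Or.inl (shift_lt_of_eq0 h0 hxy)
  have hx0y0 : x 0 < y 0 := lt_of_le_of_ne hxy.le0 h0
  have hsx0 : s 0 ≤ x 0 := hsx.le0
  rcases hyu with hy0 | ⟨hy0, hyt⟩
  · -- y 0 < s 0 + 1
    rcases sdot_first hy with ⟨⟨m, hm⟩, hyne⟩ | ⟨⟨m, hm⟩, hytop⟩
    · rcases sdot_first hs with ⟨⟨q, hq⟩, -⟩ | ⟨⟨q, hq⟩, hstop⟩
      · exfalso
        rw [hm, hq] at hy0
        have h1 : (m : ℝ) < q + 1 := by exact_mod_cast hy0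
        have h1' : (m : ℤ) < q + 1 := by exact_mod_cast h1
        have h3 : ((m : ℝ) : Entry) ≤ ((q : ℝ) : Entry) := by
          have : (m : ℝ) ≤ (q : ℝ) := by exact_mod_cast (by omega : (m : ℤ) ≤ q)
          exact_mod_cast this
        rw [hq] at hsx0
        rw [hm] at hx0y0
        exact absurd (lt_of_le_of_lt hsx0 hx0y0) (not_lt.mpr h3)
      · right
        constructor
        · rw [hstop]
          exact addrLt_topAddr hyne
        · rcases sdot_first hx with ⟨⟨m2, hm2⟩, -⟩ | ⟨-, hxtop⟩
          · exfalso
            rw [hq, hm2] at hsx0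
            rw [hm2, hm] at hx0y0
            rw [hm, hq] at hy0
            have h1 : (q : ℝ) + 1 / 2 ≤ m2 := by exact_mod_cast hsx0
            have h2 : (m2 : ℝ) < m := by exact_mod_cast hx0y0
            have h3 : (m : ℝ) < q + 1 / 2 + 1 := by exact_mod_cast hy0
            have i1 : (2 * q + 1 : ℤ) ≤ 2 * m2 := by
              exact_mod_cast (by linarith : (2 * q + 1 : ℝ) ≤ 2 * m2)
            have i2 : (m2 : ℤ) < m := by exact_mod_cast h2
            have i3 : (2 * m : ℤ) < 2 * q + 3 := by
              exact_mod_cast (by linarith : (2 * m : ℝ) < 2 * q + 3)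
            omega
          · rw [hstop, hxtop]
            exact Or.inr rfl
    · left
      rw [hytop]
      rcases sdot_first hx with ⟨-, hxne⟩ | ⟨⟨m2, hm2⟩, hxtop⟩
      · exact addrLt_topAddr hxne
      · exfalso
        rw [hm2, hm] at hx0y0
        have h2 : (m2 : ℝ) + 1 / 2 < (m : ℝ) + 1 / 2 := by exact_mod_cast hx0y0
        rcases sdot_first hs with ⟨⟨q, hq⟩, -⟩ | ⟨⟨q, hq⟩, -⟩
        · rw [hq, hm2] at hsx0
          rw [hm, hq] at hy0
          have h1 : (q : ℝ) ≤ m2 + 1 / 2 := by exact_mod_cast hsx0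
          have h3 : (m : ℝ) + 1 / 2 < q + 1 := by exact_mod_cast hy0
          have i1 : (2 * q : ℤ) ≤ 2 * m2 + 1 := by
            exact_mod_cast (by linarith : (2 * q : ℝ) ≤ 2 * m2 + 1)
          have i2 : (m2 : ℤ) < m := by exact_mod_cast (by linarith : (m2 : ℝ) < m)
          have i3 : (2 * m + 1 : ℤ) < 2 * q + 2 := by
            exact_mod_cast (by linarith : (2 * m + 1 : ℝ) < 2 * q + 2)
          omega
        · rw [hq, hm2] at hsx0
          rw [hm, hq] at hy0
          have h1 : (q : ℝ) + 1 / 2 ≤ m2 + 1 / 2 := by exact_mod_cast hsx0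
          have h3 : (m : ℝ) + 1 / 2 < q + 1 / 2 + 1 := by exact_mod_cast hy0
          have i1 : (q : ℤ) ≤ m2 := by exact_mod_cast (by linarith : (q : ℝ) ≤ m2)
          have i2 : (m2 : ℤ) < m := by exact_mod_cast (by linarith : (m2 : ℝ) < m)
          have i3 : (m : ℤ) < q + 1 := by exact_mod_cast (by linarith : (m : ℝ) < q + 1)
          omega
  · -- y 0 = s 0 + 1
    right
    refine ⟨hyt, ?_⟩
    by_cases hsx0e : s 0 = x 0
    · exact shift_le_of_eq0 hsx0e hsx
    have hsx0lt : s 0 < x 0 := lt_of_le_of_ne hsx0 hsx0e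
    rcases sdot_first hx with ⟨⟨m, hm⟩, -⟩ | ⟨-, hxtop⟩
    · rcases sdot_first hs with ⟨⟨q, hq⟩, -⟩ | ⟨⟨q, hq⟩, hstop⟩
      · exfalso
        rw [hq, hm] at hsx0lt
        have h1 : (q : ℝ) < m := by exact_mod_cast hsx0lt
        rw [hm] at hx0y0
        rw [hy0, hq] at hx0y0
        have h2 : (m : ℝ) < q + 1 := by exact_mod_cast hx0y0
        have i1 : (q : ℤ) < m := by exact_mod_cast h1
        have i2 : (m : ℤ) < q + 1 := by exact_mod_cast h2
        omega
      · exfalso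
        rcases sdot_first hy with ⟨⟨m', hm'⟩, -⟩ | ⟨-, hytop⟩
        · rw [hm', hq] at hy0
          have h1 : (m' : ℝ) = q + 1 / 2 + 1 := by exact_mod_cast hy0
          have i1 : (2 * m' : ℤ) = 2 * q + 3 := by
            exact_mod_cast (by linarith : (2 * m' : ℝ) = 2 * q + 3)
          omega
        · rw [hytop, hstop] at hyt
          exact addrLt_irrefl _ hyt
    · rw [hxtop]
      rcases eq_or_ne (shift s) topAddr with he | he
      · exact Or.inr he
      · exact Or.inl (addrLt_topAddr he)

/-- Monotonicity of the "upper part" predicate along the interval. -/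
lemma stmt14_claim2 {s x y : Addr} (hs : InSDot s) (hx : InSDot x) (hy : InSDot y)
    (hsx : addrLe s x)
    (hyu : y 0 < s 0 + 1 ∨ (y 0 = s 0 + 1 ∧ addrLt (shift y) (shift s)))
    (hxy : addrLt x y)
    (hty : addrLe (shift s) (shift y)) : addrLe (shift s) (shift x) := by
  by_cases h0 : s 0 = x 0
  · exact shift_le_of_eq0 h0 hsx
  have hs0x0 : s 0 < x 0 := lt_of_le_of_ne hsx.le0 h0
  rcases sdot_first hx with ⟨⟨m, hm⟩, -⟩ | ⟨-, hxtop⟩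
  · rcases sdot_first hs with ⟨⟨q, hq⟩, -⟩ | ⟨⟨q, hq⟩, hstop⟩
    · exfalso
      rw [hq, hm] at hs0x0
      have hq_lt : (q : ℝ) < m := by exact_mod_cast hs0x0
      have hx0y0 : x 0 ≤ y 0 := hxy.le0
      rcases hyu with hy0 | ⟨-, hyt⟩
      · have hc : ((m : ℝ) : Entry) < ((q : ℝ) : Entry) + 1 := by
          rw [← hm, ← hq]
          exact lt_of_le_of_lt hx0y0 hy0
        have h2 : (m : ℝ) < q + 1 := by exact_mod_cast hc
        have i1 : (q : ℤ) < m := by exact_mod_cast hq_lt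
        have i2 : (m : ℤ) < q + 1 := by exact_mod_cast h2
        omega
      · exact addrLt_irrefl _ (addrLt_of_le_of_lt hty hyt)
    · rw [hstop] at hty ⊢
      have hyt : shift y = topAddr := by
        rcases hty with h | h
        · exact absurd h (not_addrLt_topAddr_left _)
        · exact h.symm
      rcases sdot_first hy with ⟨-, hyne⟩ | ⟨⟨m', hm'⟩, -⟩
      · exact absurd hyt hyne
      · exfalso
        rcases hyu with hy0 | ⟨-, hyt2⟩
        · rw [hq, hm] at hs0x0
          have h1 : (q : ℝ) + 1 / 2 < m := by exact_mod_cast hs0x0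
          have h2' := hxy.le0
          rw [hm, hm'] at h2'
          have h2 : (m : ℝ) ≤ (m' : ℝ) + 1 / 2 := by exact_mod_cast h2'
          rw [hm', hq] at hy0
          have h3 : (m' : ℝ) + 1 / 2 < q + 1 / 2 + 1 := by exact_mod_cast hy0
          have i1 : (2 * q + 1 : ℤ) < 2 * m := by
            exact_mod_cast (by linarith : (2 * q + 1 : ℝ) < 2 * m)
          have i2 : (2 * m : ℤ) ≤ 2 * m' + 1 := by
            exact_mod_cast (by linarith : (2 * m : ℝ) ≤ 2 * m' + 1)
          have i3 : (2 * m' + 1 : ℤ) < 2 * q + 3 := by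
            exact_mod_cast (by linarith : (2 * m' + 1 : ℝ) < 2 * q + 3)
          omega
        · rw [hyt] at hyt2
          exact not_addrLt_topAddr_left _ hyt2
  · rw [hxtop]
    rcases eq_or_ne (shift s) topAddr with he | he
    · exact Or.inr he
    · exact Or.inl (addrLt_topAddr he)

end StmtFourteenAux

/-- **Shift Preserves Order On Small Intervals.** Let `s ∈ Ṡ` and let `s'`
be obtained from `s` by increasing the first entry by `1`. Then the shift preserves the
circular order of `S̄` on `[s, s')`: if `a < b < c` lie in `[s, s')`, then
`σ(a) < σ(b) < σ(c)`, or `σ(b) < σ(c) < σ(a)`, or `σ(c) < σ(a) < σ(b)`. -/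
theorem stmt14 (s : Addr) (hs : InSDot s)
    (s' : Addr) (hs' : s' = consAddr (s 0 + 1) (shift s)) :
    ∀ a b c : Addr, InSBar a → InSBar b → InSBar c →
      addrLe s a → addrLt a s' → addrLe s b → addrLt b s' → addrLe s c → addrLt c s' →
      addrLt a b → addrLt b c →
      (addrLt (shift a) (shift b) ∧ addrLt (shift b) (shift c)) ∨
      (addrLt (shift b) (shift c) ∧ addrLt (shift c) (shift a)) ∨
      (addrLt (shift c) (shift a) ∧ addrLt (shift a) (shift b)) := by
  intro a b c ha hb hc hsa has' hsb hbs' hsc hcs' hab hbc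
  have h0 : s' 0 = s 0 + 1 := by simp [hs', consAddr]
  have hsh : shift s' = shift s := by
    funext k
    simp [hs', consAddr, shift]
  have ha' : InSDot a := by
    rcases ha with h | h
    · exact h
    · exact absurd (h ▸ has') (not_addrLt_topAddr_left s')
  have hb' : InSDot b := by
    rcases hb with h | h
    · exact h
    · exact absurd (h ▸ hbs') (not_addrLt_topAddr_left s')
  have hc' : InSDot c := by
    rcases hc with h | h
    · exact h
    · exact absurd (h ▸ hcs') (not_addrLt_topAddr_left s')
  have hau := lt_s'_cases h0 hsh has'
  have hbu := lt_s'_cases h0 hsh hbs'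
  have hcu := lt_s'_cases h0 hsh hcs'
  by_cases hUa : addrLe (shift s) (shift a)
  · by_cases hUc : addrLe (shift s) (shift c)
    · have hUb : addrLe (shift s) (shift b) := stmt14_claim2 hs hb' hc' hsb hcu hbc hUc
      left
      constructor
      · rcases stmt14_claim1 hs ha' hb' hsa hbu hab with h | ⟨h1, -⟩
        · exact h
        · exact absurd (addrLt_of_le_of_lt hUb h1) (addrLt_irrefl _)
      · rcases stmt14_claim1 hs hb' hc' hsb hcu hbc with h | ⟨h1, -⟩
        · exact h
        · exact absurd (addrLt_of_le_of_lt hUc h1) (addrLt_irrefl _)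
    · have hct : addrLt (shift c) (shift s) := by
        have hne : shift c ≠ shift s := fun h => hUc (Or.inr h.symm)
        rcases addrLt_total hne with h | h
        · exact h
        · exact absurd (Or.inl h) hUc
      by_cases hUb : addrLe (shift s) (shift b)
      · right; right
        refine ⟨addrLt_of_lt_of_le hct hUa, ?_⟩
        rcases stmt14_claim1 hs ha' hb' hsa hbu hab with h | ⟨h1, -⟩
        · exact h
        · exact absurd (addrLt_of_le_of_lt hUb h1) (addrLt_irrefl _)
      · right; left
        constructor
        · rcases stmt14_claim1 hs hb' hc' hsb hcu hbc with h | ⟨-, h2⟩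
          · exact h
          · exact absurd h2 hUb
        · exact addrLt_of_lt_of_le hct hUa
  · have hUb : ¬ addrLe (shift s) (shift b) := fun h =>
      hUa (stmt14_claim2 hs ha' hb' hsa hbu hab h)
    have hUc : ¬ addrLe (shift s) (shift c) := fun h =>
      hUb (stmt14_claim2 hs hb' hc' hsb hcu hbc h)
    left
    constructor
    · rcases stmt14_claim1 hs ha' hb' hsa hbu hab with h | ⟨-, h2⟩
      · exact h
      · exact absurd h2 hUa
    · rcases stmt14_claim1 hs hb' hc' hsb hcu hbc with h | ⟨-, h2⟩
      · exact h
      · exact absurd h2 hUb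

end
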